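/- Let γ₂ > 2γ₀ ≥ 0 and C > 0. There exist k₁ = k₁(C, γ₀, γ₂) > 0 and C′ = C′(C, γ₀, γ₂) > 0 with the following property. Suppose k₀ ≥ k₁ and λ : ℝ² → ℝ is of class C² with λ(k) = |k|² for |k| < k₀ and |D^m(λ(k) − |k|²)| ≤ C |k|^{−γ₂ + γ₀|m|} for all multi-indices m with |m| ≤ 2 and all |k| ≥ k₀. Then for every z ∈ ℝ² the equation ∇λ(k) = z has exactly one solution k*(z) ∈ ℝ², and for every z with |z| ≥ 4k₀ one has |k*(z) − z/2| ≤ C′ |z|^{−(γ₂ − γ₀)}. -/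

import Mathlib

open MeasureTheory

/-- Partial derivative in the `i`-th coordinate direction (real-valued functions). -/
noncomputable def pdR (i : Fin 2) (f : EuclideanSpace ℝ (Fin 2) → ℝ) :
    EuclideanSpace ℝ (Fin 2) → ℝ :=
  fun x => fderiv ℝ f x (EuclideanSpace.single i 1)

/-- The iterated partial derivative `D^m = ∂₁^{m₁} ∂₂^{m₂}` for a multi-index `m = (m₁, m₂)`. -/
noncomputable def DmR (m : ℕ × ℕ) (f : EuclideanSpace ℝ (Fin 2) → ℝ) :
    EuclideanSpace ℝ (Fin 2) → ℝ :=
  (pdR 0)^[m.1] ((pdR 1)^[m.2] f)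

/-! Write `λ k = ‖k‖² + h k`. The perturbation `h` vanishes on the ball of radius `k₀` and its
second derivatives are `O(k₀^{-(γ₂-2γ₀)})` outside it, so for `k₀` large the Hessian of `h` has
norm `≤ 1/2` everywhere and `∇h` is `1/2`-Lipschitz. Then `∇λ k = 2k + ∇h k = z` is the
fixed-point equation of the contraction `k ↦ (z - ∇h k)/2`. Its solution satisfies
`k* - z/2 = -∇h(k*)/2` and, since `∇h` is small, `‖k*‖ ≥ ‖z‖/4 ≥ k₀`; so the decay
`‖∇h k‖ = O(‖k‖^{-(γ₂-γ₀)})` at `k*` becomes a decay in `‖z‖`. -/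

open InnerProductSpace Filter Topology
open scoped NNReal

theorem ContinuousLinearMap.opNorm_le_card_mul_of_norm_apply_single_le {ι F : Type*} [Fintype ι]
    [DecidableEq ι] [SeminormedAddCommGroup F] [NormedSpace ℝ F]
    (L : EuclideanSpace ℝ ι →L[ℝ] F) {ε : ℝ} (hε : 0 ≤ ε)
    (h : ∀ i, ‖L (EuclideanSpace.single i 1)‖ ≤ ε) : ‖L‖ ≤ Fintype.card ι * ε := by
  refine L.opNorm_le_bound (by positivity) fun v => ?_
  have hv : v = ∑ i, v i • EuclideanSpace.single i (1 : ℝ) := by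
    simpa using ((EuclideanSpace.basisFun ι ℝ).sum_repr v).symm
  calc ‖L v‖ = ‖∑ i, v i • L (EuclideanSpace.single i 1)‖ := by
        conv_lhs => rw [hv]
        simp only [map_sum, map_smul]
    _ ≤ ∑ i, ‖v i‖ * ‖L (EuclideanSpace.single i 1)‖ := by
        exact (norm_sum_le _ _).trans (Finset.sum_le_sum fun i _ => norm_smul_le _ _)
    _ ≤ ∑ _i : ι, ‖v‖ * ε := by
        gcongr with i
        · exact PiLp.norm_apply_le v i
        · exact h i
    _ = Fintype.card ι * ε * ‖v‖ := by
        simp only [Finset.sum_const, Finset.card_univ, nsmul_eq_mul]; ring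

theorem existsUnique_smul_add_eq_of_lipschitzWith {E : Type*} [NormedAddCommGroup E]
    [NormedSpace ℝ E] [CompleteSpace E] {g : E → E} {K : ℝ≥0} (hg : LipschitzWith K g)
    {a : ℝ} (ha : K < ‖a‖₊) (z : E) : ∃! k, a • k + g k = z := by
  have ha₀ : a ≠ 0 := by rintro rfl; simp at ha
  set T : E → E := fun k => a⁻¹ • (z - g k)
  have hT : ContractingWith (‖a⁻¹‖₊ * K) T := by
    refine ⟨?_, ?_⟩
    · rw [nnnorm_inv, inv_mul_lt_iff₀ (by simpa using ha₀), mul_one]; exact ha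
    · exact (lipschitzWith_smul a⁻¹).comp (by simpa using (LipschitzWith.const z).sub hg)
  have hfix : ∀ k, Function.IsFixedPt T k ↔ a • k + g k = z := by
    intro k
    rw [Function.IsFixedPt, inv_smul_eq_iff₀ ha₀, sub_eq_iff_eq_add, eq_comm]
  exact ⟨_, (hfix _).1 hT.fixedPoint_isFixedPt, fun k hk => hT.fixedPoint_unique ((hfix k).2 hk)⟩

theorem lipschitzWith_gradient_of_nnnorm_fderiv_fderiv_le {E : Type*} [NormedAddCommGroup E]
    [InnerProductSpace ℝ E] [CompleteSpace E] {f : E → ℝ} {K : ℝ≥0}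
    (hf : Differentiable ℝ (fderiv ℝ f)) (h : ∀ x, ‖fderiv ℝ (fderiv ℝ f) x‖₊ ≤ K) :
    LipschitzWith K (gradient f) := by
  have := (toDual ℝ E).symm.lipschitz.comp (lipschitzWith_of_nnnorm_fderiv_le hf h)
  rw [one_mul] at this
  exact this

theorem gradient_add_norm_sq {E : Type*} [NormedAddCommGroup E]
    [InnerProductSpace ℝ E] [CompleteSpace E] {f : E → ℝ} {x : E} (hf : DifferentiableAt ℝ f x) :
    gradient (fun y => f y + ‖y‖ ^ 2) x = gradient f x + (2 : ℝ) • x := by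
  have H : HasFDerivAt (fun y => f y + ‖y‖ ^ 2) (fderiv ℝ f x + 2 • innerSL ℝ x) x :=
    hf.hasFDerivAt.add (hasStrictFDerivAt_norm_sq x).hasFDerivAt
  refine (hasGradientAt_iff_hasFDerivAt.2 (H.congr_fderiv ?_)).gradient
  ext v
  simp

theorem pdR_pdR_apply {f : EuclideanSpace ℝ (Fin 2) → ℝ} {x : EuclideanSpace ℝ (Fin 2)}
    (hf : DifferentiableAt ℝ (fderiv ℝ f) x) (i j : Fin 2) :
    pdR i (pdR j f) x =
      fderiv ℝ (fderiv ℝ f) x (EuclideanSpace.single i 1) (EuclideanSpace.single j 1) := by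
  let ev := ContinuousLinearMap.apply ℝ ℝ (EuclideanSpace.single j (1 : ℝ))
  change fderiv ℝ (ev ∘ fderiv ℝ f) x _ = _
  rw [(ev.hasFDerivAt.comp x hf.hasFDerivAt).fderiv]
  rfl

theorem norm_fderiv_fderiv_le_of_abs_DmR_le {f : EuclideanSpace ℝ (Fin 2) → ℝ}
    {x : EuclideanSpace ℝ (Fin 2)} (hf : ContDiffAt ℝ 2 f x) {ε : ℝ}
    (h : ∀ m : ℕ × ℕ, m.1 + m.2 = 2 → |DmR m f x| ≤ ε) :
    ‖fderiv ℝ (fderiv ℝ f) x‖ ≤ 4 * ε := by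
  have hε : 0 ≤ ε := (abs_nonneg _).trans (h (2, 0) rfl)
  have hdiff : DifferentiableAt ℝ (fderiv ℝ f) x :=
    (hf.fderiv_right (m := 1) le_rfl).differentiableAt one_ne_zero
  have hsymm := hf.isSymmSndFDerivAt (by simp)
  have hentry : ∀ i j : Fin 2, ‖fderiv ℝ (fderiv ℝ f) x (EuclideanSpace.single i 1)
      (EuclideanSpace.single j 1)‖ ≤ ε := by
    intro i j
    fin_cases i <;> fin_cases j
    · simpa [Real.norm_eq_abs, DmR, ← pdR_pdR_apply hdiff] using h (2, 0) rfl
    · simpa [Real.norm_eq_abs, DmR, ← pdR_pdR_apply hdiff] using h (1, 1) rfl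
    · simpa [Real.norm_eq_abs, DmR, hsymm.eq, ← pdR_pdR_apply hdiff] using h (1, 1) rfl
    · simpa [Real.norm_eq_abs, DmR, ← pdR_pdR_apply hdiff] using h (0, 2) rfl
  have hrow : ∀ i, ‖fderiv ℝ (fderiv ℝ f) x (EuclideanSpace.single i 1)‖ ≤ 2 * ε := fun i => by
    have := ContinuousLinearMap.opNorm_le_card_mul_of_norm_apply_single_le _ hε (hentry i)
    rwa [Fintype.card_fin, Nat.cast_ofNat] at this
  have := ContinuousLinearMap.opNorm_le_card_mul_of_norm_apply_single_le _ (by positivity) hrow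
  rw [Fintype.card_fin, Nat.cast_ofNat] at this
  linarith

theorem norm_gradient_le_of_abs_DmR_le {f : EuclideanSpace ℝ (Fin 2) → ℝ}
    {x : EuclideanSpace ℝ (Fin 2)} {ε : ℝ}
    (h : ∀ m : ℕ × ℕ, m.1 + m.2 = 1 → |DmR m f x| ≤ ε) : ‖gradient f x‖ ≤ 2 * ε := by
  have hε : 0 ≤ ε := (abs_nonneg _).trans (h (1, 0) rfl)
  rw [gradient, LinearIsometryEquiv.norm_map]
  simpa using (fderiv ℝ f x).opNorm_le_card_mul_of_norm_apply_single_le hε fun i => by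
    fin_cases i
    exacts [h (1, 0) rfl, h (0, 1) rfl]

theorem eventuallyEq_zero_of_norm_lt {E F : Type*} [SeminormedAddCommGroup E] [Zero F]
    {f : E → F} {R : ℝ} (hf : ∀ y, ‖y‖ < R → f y = 0) {x : E} (hx : ‖x‖ < R) :
    f =ᶠ[𝓝 x] fun _ => 0 := by
  filter_upwards [(isOpen_lt continuous_norm continuous_const).mem_nhds hx] with y hy
  exact hf y hy

theorem norm_fderiv_fderiv_le_of_eq_zero_of_abs_DmR_le {f : EuclideanSpace ℝ (Fin 2) → ℝ}
    (hf : ContDiff ℝ 2 f) {R ε : ℝ} (hε : 0 ≤ ε) (hzero : ∀ k, ‖k‖ < R → f k = 0)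
    (hDm : ∀ k, R ≤ ‖k‖ → ∀ m : ℕ × ℕ, m.1 + m.2 = 2 → |DmR m f k| ≤ ε) (k) :
    ‖fderiv ℝ (fderiv ℝ f) k‖ ≤ 4 * ε := by
  rcases lt_or_ge ‖k‖ R with hk | hk
  · rw [(eventuallyEq_zero_of_norm_lt hzero hk).fderiv.fderiv_eq, fderiv_fun_const, fderiv_zero,
      Pi.zero_apply, ContinuousLinearMap.opNorm_zero]
    positivity
  · exact norm_fderiv_fderiv_le_of_abs_DmR_le hf.contDiffAt (hDm k hk)

theorem norm_gradient_le_of_eq_zero_of_abs_DmR_le {f : EuclideanSpace ℝ (Fin 2) → ℝ}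
    {R ε : ℝ} (hε : 0 ≤ ε) (hzero : ∀ k, ‖k‖ < R → f k = 0)
    (hDm : ∀ k, R ≤ ‖k‖ → ∀ m : ℕ × ℕ, m.1 + m.2 = 1 → |DmR m f k| ≤ ε) (k) :
    ‖gradient f k‖ ≤ 2 * ε := by
  rcases lt_or_ge ‖k‖ R with hk | hk
  · rw [(eventuallyEq_zero_of_norm_lt hzero hk).gradient_eq, gradient_fun_const, norm_zero]
    positivity
  · exact norm_gradient_le_of_abs_DmR_le (hDm k hk)

theorem existsUnique_two_smul_add_gradient_eq {h : EuclideanSpace ℝ (Fin 2) → ℝ}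
    (hh : ContDiff ℝ 2 h) {R : ℝ} (hzero : ∀ k, ‖k‖ < R → h k = 0)
    (hDm : ∀ k, R ≤ ‖k‖ → ∀ m : ℕ × ℕ, m.1 + m.2 = 2 → |DmR m h k| ≤ 1 / 8) (z) :
    ∃! k, (2 : ℝ) • k + gradient h k = z := by
  have hlip : LipschitzWith (1 / 2) (gradient h) :=
    lipschitzWith_gradient_of_nnnorm_fderiv_fderiv_le
      ((hh.fderiv_right (m := 1) le_rfl).differentiable one_ne_zero) fun k => by
    have := norm_fderiv_fderiv_le_of_eq_zero_of_abs_DmR_le hh (by norm_num) hzero hDm k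
    rw [← NNReal.coe_le_coe, coe_nnnorm]
    norm_num
    linarith
  exact existsUnique_smul_add_eq_of_lipschitzWith hlip (by norm_num) z

theorem norm_sub_half_smul_le_of_two_smul_add_eq {E : Type*} [NormedAddCommGroup E]
    [NormedSpace ℝ E] {g : E → E} {k₀ B s : ℝ} (hk₀ : 0 < k₀) (hs : 0 ≤ s) (hB : 0 ≤ B)
    (hg : ∀ x, ‖g x‖ ≤ k₀) (hdecay : ∀ x, k₀ ≤ ‖x‖ → ‖g x‖ ≤ 2 * B * ‖x‖ ^ (-s))
    {z k : E} (hz : 4 * k₀ ≤ ‖z‖) (hk : (2 : ℝ) • k + g k = z) :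
    ‖k - (1 / 2 : ℝ) • z‖ ≤ B * 4 ^ s * ‖z‖ ^ (-s) := by
  have hdist : ‖k - (1 / 2 : ℝ) • z‖ = ‖g k‖ / 2 := by
    rw [show k - (1 / 2 : ℝ) • z = -((1 / 2 : ℝ) • g k) by rw [← hk]; module, norm_neg,
      norm_smul]
    norm_num
    ring
  have hk_large : ‖z‖ / 4 ≤ ‖k‖ := by
    have : ‖z‖ ≤ 2 * ‖k‖ + ‖g k‖ := by
      rw [← hk]; exact (norm_add_le _ _).trans (by rw [norm_smul]; norm_num)
    linarith [hg k]
  have hz₀ : 0 < ‖z‖ / 4 := by linarith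
  have hgk := hdecay k (by linarith)
  calc ‖k - (1 / 2 : ℝ) • z‖ = ‖g k‖ / 2 := hdist
    _ ≤ B * ‖k‖ ^ (-s) := by linarith
    _ ≤ B * (‖z‖ / 4) ^ (-s) :=
      mul_le_mul_of_nonneg_left (Real.rpow_le_rpow_of_nonpos hz₀ hk_large (by linarith)) hB
    _ = B * 4 ^ s * ‖z‖ ^ (-s) := by
      rw [Real.div_rpow (by positivity) (by norm_num), Real.rpow_neg (by norm_num : (0:ℝ) ≤ 4),
        div_inv_eq_mul]
      ring

/-- Stationary-point lemma: if `λ` is `C²`, equals `|k|²` for `|k| < k₀`, and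
`|D^m(λ(k) − |k|²)| ≤ C |k|^{−γ₂+γ₀|m|}` for `|m| ≤ 2` and `|k| ≥ k₀`, with `γ₂ > 2γ₀ ≥ 0`,
then for `k₀` large the equation `∇λ(k) = z` has exactly one solution `k*(z)`, and
`|k*(z) − z/2| ≤ C′ |z|^{−(γ₂−γ₀)}` whenever `|z| ≥ 4k₀`. -/
theorem stmt_9 (γ₀ γ₂ C : ℝ) (hγ₀ : 0 ≤ γ₀) (hγ : 2 * γ₀ < γ₂) (hC : 0 < C) :
    ∃ k₁ C' : ℝ, 0 < k₁ ∧ 0 < C' ∧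
    ∀ k₀ : ℝ, k₁ ≤ k₀ →
    ∀ lam : EuclideanSpace ℝ (Fin 2) → ℝ, ContDiff ℝ 2 lam →
    (∀ k : EuclideanSpace ℝ (Fin 2), ‖k‖ < k₀ → lam k = ‖k‖ ^ 2) →
    (∀ m : ℕ × ℕ, m.1 + m.2 ≤ 2 → ∀ k : EuclideanSpace ℝ (Fin 2), k₀ ≤ ‖k‖ →
      |DmR m (fun y => lam y - ‖y‖ ^ 2) k| ≤ C * ‖k‖ ^ (-γ₂ + γ₀ * ((m.1 + m.2 : ℕ) : ℝ))) →
    (∀ z : EuclideanSpace ℝ (Fin 2),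
        ∃! kstar : EuclideanSpace ℝ (Fin 2), gradient lam kstar = z) ∧
    (∀ z : EuclideanSpace ℝ (Fin 2), 4 * k₀ ≤ ‖z‖ →
      ∀ kstar : EuclideanSpace ℝ (Fin 2), gradient lam kstar = z →
        ‖kstar - (1 / 2 : ℝ) • z‖ ≤ C' * ‖z‖ ^ (-(γ₂ - γ₀))) := by
  have hsmall_eventually : ∀ s : ℝ, 0 < s → ∀ᶠ b : ℝ in atTop, C * b ^ (-s) ≤ 1 / 8 :=
    fun s hs => ((tendsto_rpow_neg_atTop hs).const_mul C).eventually (ge_mem_nhds (by norm_num))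
  obtain ⟨a, ha⟩ := eventually_atTop.1 <| (eventually_ge_atTop 1).and <|
    (hsmall_eventually (γ₂ - γ₀ * 2) (by linarith)).and (hsmall_eventually (γ₂ - γ₀) (by linarith))
  refine ⟨max a 1, C * 4 ^ (γ₂ - γ₀), by positivity, by positivity, ?_⟩
  intro k₀ hk₀ lam hlam hball hDm
  have hk₀1 : 1 ≤ k₀ := (le_max_right _ _).trans hk₀
  have hfar : ∀ k : EuclideanSpace ℝ (Fin 2), k₀ ≤ ‖k‖ →
      C * ‖k‖ ^ (-(γ₂ - γ₀ * 2)) ≤ 1 / 8 ∧ C * ‖k‖ ^ (-(γ₂ - γ₀)) ≤ 1 / 8 :=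
    fun k hk => (ha ‖k‖ ((le_max_left _ _).trans (hk₀.trans hk))).2
  set h := fun y => lam y - ‖y‖ ^ 2 with h_def
  have hh : ContDiff ℝ 2 h := hlam.sub (contDiff_norm_sq ℝ)
  have hzero : ∀ k, ‖k‖ < k₀ → h k = 0 := fun k hk => by simp [h_def, hball k hk]
  have hDm' : ∀ n : ℕ, n ≤ 2 → ∀ k, k₀ ≤ ‖k‖ → ∀ m : ℕ × ℕ, m.1 + m.2 = n →
      |DmR m h k| ≤ C * ‖k‖ ^ (-(γ₂ - γ₀ * n)) := fun n hn k hk m hm => by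
    convert hDm m (hm ▸ hn) k hk using 3
    rw [hm]; ring
  have hdecay : ∀ k, k₀ ≤ ‖k‖ → ‖gradient h k‖ ≤ 2 * C * ‖k‖ ^ (-(γ₂ - γ₀)) := fun k hk => by
    simpa [mul_assoc] using norm_gradient_le_of_abs_DmR_le (hDm' 1 (by norm_num) k hk)
  have hbounded : ∀ k, ‖gradient h k‖ ≤ k₀ := fun k => by
    have := norm_gradient_le_of_eq_zero_of_abs_DmR_le (ε := 1 / 8) (by norm_num) hzero
      (fun k hk m hm => (hDm' 1 (by norm_num) k hk m hm).trans (by simpa using (hfar k hk).2)) k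
    linarith
  have hgrad : ∀ k, gradient lam k = (2 : ℝ) • k + gradient h k := fun k => by
    have := gradient_add_norm_sq ((hh.differentiable two_ne_zero) k)
    simp only [h_def, sub_add_cancel] at this
    rw [this, add_comm]
  refine ⟨fun z => ?_, fun z hz k hk => ?_⟩
  · simp_rw [hgrad]
    exact existsUnique_two_smul_add_gradient_eq hh hzero (fun k hk m hm =>
      (hDm' 2 le_rfl k hk m hm).trans (by simpa using (hfar k hk).1)) z
  · exact norm_sub_half_smul_le_of_two_smul_add_eq (by linarith) (by linarith) hC.le hbounded
      hdecay hz ((hgrad k).symm.trans hk)
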